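/- Let X^n ∼ p_X^{⊗n} on a finite alphabet, with Markov chain X^n − (M,J) − Y^n where J is independent of X^n, and suppose ‖P_{Y^n} − p_X^{⊗n}‖_TV ≤ ε < 1/4. With T uniform on [n] independent of everything else and V = (M, J, T, Y^{T−1}), we have I(M,J; Y^n) ≥ n·I(V; Y_T) − 2n·g(ε), where g(ε) = 4ε(log|X| + log(1/ε)). -/

import Mathlib

open MeasureTheory ProbabilityTheory Real

/-- Total variation distance between two measures. -/
noncomputable def tvDist {α : Type*} [MeasurableSpace α] (μ ν : Measure α) : ℝ :=
  ⨆ s : {s : Set α // MeasurableSet s}, |(μ s.1).toReal - (ν s.1).toReal|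

/-- Shannon entropy (base 2) of a distribution on a finite type. -/
noncomputable def entropy {α : Type*} [Fintype α] [MeasurableSpace α] (μ : Measure α) : ℝ :=
  -∑ x : α, (μ {x}).toReal * Real.logb 2 (μ {x}).toReal

/-- Shannon mutual information (base 2) between the coordinates of a joint distribution. -/
noncomputable def mutualInfo {α β : Type*} [Fintype α] [MeasurableSpace α]
    [Fintype β] [MeasurableSpace β] (μ : Measure (α × β)) : ℝ :=
  entropy (μ.map Prod.fst) + entropy (μ.map Prod.snd) - entropy μ

/-- The uniform distribution on a finite type. -/
noncomputable def unif (α : Type*) [Fintype α] [MeasurableSpace α] : Measure α :=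
  (Fintype.card α : ENNReal)⁻¹ • Measure.count

/-- Discrete measurable structure on `Option`. -/
instance {α : Type*} : MeasurableSpace (Option α) := ⊤

/-- The prefix y^{t-1} of a sequence y^n, encoded as a function `Fin n → Option X`
revealing exactly the first t coordinates. -/
def prefixOf {X : Type*} {n : ℕ} (y : Fin n → X) (t : Fin n) : Fin n → Option X :=
  fun i => if (i : ℕ) < (t : ℕ) then some (y i) else none

/-!
Write `V_t = (M, J, t, Y^{t-1})`. Since `V` reveals the uniform index `T`,
`H(V) = log n + avg_t H(V_t)` and `H(V, Y_T) = log n + avg_t H(V_t, Y_t)`; since `(V_t, Y_t)`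
carries the same information as `(M, J, Y^t)`, the sum `∑_t (H(V_t, Y_t) - H(V_t))` telescopes to
`H(M, J, Yⁿ) - H(M, J)`. This gives the exact identity
`I(M,J; Yⁿ) = n I(V; Y_T) + H(Yⁿ) - n H(Y_T)`.

The defect `n H(Y_T) - H(Yⁿ)` is bounded by Fannes' inequality, applied twice: `H(Yⁿ)` is within
`ε n log|X| + 2ε log(1/ε)` of `H(p^⊗n) = n H(p)`, and `Y_T`, whose law is the average of the
one-dimensional marginals of `Yⁿ`, is `ε`-close to `p` in total variation.
-/

open Finset

namespace Real

lemma negMulLog_add_le {u v : ℝ} (hu : 0 ≤ u) (hv : 0 ≤ v) :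
    negMulLog (u + v) ≤ negMulLog u + negMulLog v := by
  rcases hu.eq_or_lt with rfl | hu
  · simp
  rcases hv.eq_or_lt with rfl | hv
  · simp
  have hlu : log u ≤ log (u + v) := log_le_log hu (by linarith)
  have hlv : log v ≤ log (u + v) := log_le_log hv (by linarith)
  simp only [negMulLog, neg_mul]
  nlinarith [mul_le_mul_of_nonneg_left hlu hu.le, mul_le_mul_of_nonneg_left hlv hv.le]

lemma monotoneOn_negMulLog_add_self : MonotoneOn (fun x => negMulLog x + x) (Set.Icc 0 1) := by
  rintro x ⟨hx0, -⟩ y ⟨-, hy1⟩ hxy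
  rcases hx0.eq_or_lt with rfl | hx
  · simpa using add_nonneg (negMulLog_nonneg hxy hy1) hxy
  have hy : 0 < y := hx.trans_le hxy
  have h1 : x * (log y - log x) ≤ y - x := by
    have := mul_le_mul_of_nonneg_left (log_le_sub_one_of_pos (div_pos hy hx)) hx.le
    rwa [log_div hy.ne' hx.ne', mul_sub_one, mul_div_cancel₀ _ hx.ne'] at this
  have h2 : (y - x) * log y ≤ 0 :=
    mul_nonpos_of_nonneg_of_nonpos (by linarith) (log_nonpos hy.le hy1)
  simp only [negMulLog, neg_mul]
  nlinarith

lemma self_le_negMulLog {x : ℝ} (hx : 0 ≤ x) (hxe : x ≤ exp (-1)) : x ≤ negMulLog x := by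
  rcases hx.eq_or_lt with rfl | hx
  · simp
  have : log x ≤ -1 := (log_le_iff_le_exp hx).2 hxe
  simp only [negMulLog, neg_mul]
  nlinarith

lemma sum_negMulLog_le {β : Type*} [Fintype β] {d : β → ℝ} (hd : ∀ b, 0 ≤ d b) :
    ∑ b, negMulLog (d b) ≤ (∑ b, d b) * log (Fintype.card β) + negMulLog (∑ b, d b) := by
  rcases isEmpty_or_nonempty β with hβ | hβ
  · simp
  have hK : (0 : ℝ) < Fintype.card β := by positivity
  have jensen := concaveOn_negMulLog.le_map_sum (t := univ)
    (w := fun _ => (Fintype.card β : ℝ)⁻¹) (p := d)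
    (fun _ _ => by positivity) (by simp [hK.ne']) (fun b _ => hd b)
  simp only [smul_eq_mul, ← mul_sum] at jensen
  rw [negMulLog_mul, negMulLog, log_inv] at jensen
  exact (mul_le_mul_iff_of_pos_left (inv_pos.2 hK)).1 (jensen.trans_eq (by ring))

lemma negMulLog_sum_of_at_most_one_ne_zero {ι : Type*} {s : Finset ι} {c : ι → ℝ}
    (hc : ∀ i ∈ s, ∀ j ∈ s, c i ≠ 0 → c j ≠ 0 → i = j) :
    negMulLog (∑ i ∈ s, c i) = ∑ i ∈ s, negMulLog (c i) := by
  by_cases h : ∃ i ∈ s, c i ≠ 0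
  · obtain ⟨i, hi, hci⟩ := h
    have hzero : ∀ j ∈ s, j ≠ i → c j = 0 := fun j hj hji => by
      by_contra hcj; exact hji (hc j hj i hi hcj hci)
    rw [sum_eq_single_of_mem i hi hzero,
      sum_eq_single_of_mem i hi fun j hj hji => by rw [hzero j hj hji, negMulLog_zero]]
  · push Not at h
    rw [sum_eq_zero h, sum_eq_zero fun i hi => by rw [h i hi, negMulLog_zero], negMulLog_zero]

lemma fannes_sum_negMulLog {β : Type*} [Fintype β] {A B : β → ℝ} {ε : ℝ}
    (hA : ∀ b, 0 ≤ A b) (hB : ∀ b, 0 ≤ B b) (hA1 : ∑ b, A b = 1) (hB1 : ∑ b, B b = 1)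
    (hAB : ∀ S : Finset β, ∑ b ∈ S, A b - ∑ b ∈ S, B b ≤ ε) (hε : ε ≤ exp (-1)) :
    ∑ b, negMulLog (A b) ≤
      ∑ b, negMulLog (B b) + ε * log (Fintype.card β) + 2 * negMulLog ε := by
  classical
  -- With `m = min A B`, subadditivity bounds `H(A)` above by `H(m)` plus the entropy of the excess
  -- `A - m` (of mass `s ≤ ε`), and monotonicity of `x ↦ negMulLog x + x` bounds `H(B)` below
  -- by `H(m) - s`.
  set m : β → ℝ := fun b => min (A b) (B b)
  set s := ∑ b, (A b - m b)
  have hm : ∀ b, 0 ≤ m b := fun b => le_min (hA b) (hB b)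
  have hd : ∀ b, 0 ≤ A b - m b := fun b => sub_nonneg.2 (min_le_left _ _)
  have hB_le : ∀ b, B b ≤ 1 := fun b => hB1 ▸ single_le_sum (fun c _ => hB c) (mem_univ b)
  have hs0 : 0 ≤ s := sum_nonneg fun b _ => hd b
  have hsε : s ≤ ε := by
    convert hAB (univ.filter fun b => B b ≤ A b) using 1
    rw [← sum_sub_distrib, sum_filter]
    refine sum_congr rfl fun b _ => ?_
    by_cases h : B b ≤ A b
    · simp [m, h]
    · simp [m, h, (not_le.1 h).le]
  have hse : ∑ b, (B b - m b) = s := by simp only [s, sum_sub_distrib, hA1, hB1]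
  have hupper : ∑ b, negMulLog (A b) ≤
      ∑ b, negMulLog (m b) + s * log (Fintype.card β) + negMulLog s :=
    calc ∑ b, negMulLog (A b) = ∑ b, negMulLog (m b + (A b - m b)) := by simp
      _ ≤ ∑ b, (negMulLog (m b) + negMulLog (A b - m b)) :=
        sum_le_sum fun b _ => negMulLog_add_le (hm b) (hd b)
      _ ≤ _ := by
        rw [sum_add_distrib, add_assoc]
        gcongr
        exact sum_negMulLog_le hd
  have hlower : ∑ b, negMulLog (m b) ≤ ∑ b, negMulLog (B b) + s := by
    rw [← hse, ← sum_add_distrib]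
    gcongr with b
    have := monotoneOn_negMulLog_add_self ⟨hm b, (min_le_right _ _).trans (hB_le b)⟩
      ⟨hB b, hB_le b⟩ (min_le_right (A b) (B b))
    simp only at this
    linarith
  have hε1 : ε ≤ 1 := hε.trans (exp_le_one_iff.2 (by norm_num))
  have hlog : s * log (Fintype.card β) ≤ ε * log (Fintype.card β) :=
    mul_le_mul_of_nonneg_right hsε (log_natCast_nonneg _)
  have hneg : negMulLog s + s ≤ negMulLog ε + ε :=
    monotoneOn_negMulLog_add_self ⟨hs0, hsε.trans hε1⟩ ⟨hs0.trans hsε, hε1⟩ hsε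
  have := self_le_negMulLog (hs0.trans hsε) hε
  linarith

end Real

open Set

section Entropy

variable {α β γ : Type*} [Fintype α] [MeasurableSpace α] [MeasurableSingletonClass α]
  [Fintype β] [MeasurableSpace β] [MeasurableSingletonClass β]
  [Fintype γ] [MeasurableSpace γ] [MeasurableSingletonClass γ]

omit [MeasurableSingletonClass α] in
lemma entropy_eq_sum_negMulLog (μ : Measure α) :
    entropy μ = (∑ x, negMulLog (μ.real {x})) / log 2 := by
  simp only [entropy, negMulLog, logb, measureReal_def, sum_div, ← sum_neg_distrib]
  exact sum_congr rfl fun _ _ => by ring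

omit [Fintype β] in
lemma measureReal_map_singleton [DecidableEq β] (μ : Measure α) [IsFiniteMeasure μ]
    (g : α → β) (b : β) :
    (μ.map g).real {b} = ∑ a with g a = b, μ.real {a} := by
  rw [map_measureReal_apply (measurable_of_finite g) (measurableSet_singleton b),
    sum_measureReal_singleton]
  congr
  ext
  simp

omit [Fintype β] in
lemma mem_range_of_measureReal_map_singleton_ne_zero {μ : Measure α} {g : α → β} {b : β}
    (h : (μ.map g).real {b} ≠ 0) : b ∈ range g := by
  rw [map_measureReal_apply (measurable_of_finite g) (measurableSet_singleton b)] at h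
  obtain ⟨a, ha⟩ := nonempty_of_measureReal_ne_zero h
  exact ⟨a, ha⟩

lemma entropy_map_of_injOn (ν : Measure β) [IsFiniteMeasure ν] {σ : β → γ}
    (hσ : InjOn σ {b | ν.real {b} ≠ 0}) : entropy (ν.map σ) = entropy ν := by
  classical
  simp only [entropy_eq_sum_negMulLog, measureReal_map_singleton]
  congr 1
  rw [← sum_fiberwise univ σ fun b => negMulLog (ν.real {b})]
  refine sum_congr rfl fun c _ =>
    negMulLog_sum_of_at_most_one_ne_zero fun b hb b' hb' h h' => ?_
  rw [mem_filter] at hb hb'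
  exact hσ h h' (hb.2.trans hb'.2.symm)

lemma entropy_map_eq_of_forall_eq_iff (μ : Measure α) [IsFiniteMeasure μ] {g : α → β}
    {g' : α → γ} (h : ∀ a a', g a = g a' ↔ g' a = g' a') :
    entropy (μ.map g) = entropy (μ.map g') := by
  set ρ := μ.map fun a => (g a, g' a)
  have hsupp : {q | ρ.real {q} ≠ 0} ⊆ range fun a => (g a, g' a) :=
    fun _ hq => mem_range_of_measureReal_map_singleton_ne_zero hq
  have hfst : μ.map g = ρ.map Prod.fst := by
    rw [Measure.map_map (measurable_of_finite _) (measurable_of_finite _)]; rfl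
  have hsnd : μ.map g' = ρ.map Prod.snd := by
    rw [Measure.map_map (measurable_of_finite _) (measurable_of_finite _)]; rfl
  rw [hfst, hsnd, entropy_map_of_injOn ρ, entropy_map_of_injOn ρ]
  · rintro _ hq _ hq' he
    obtain ⟨a, rfl⟩ := hsupp hq
    obtain ⟨a', rfl⟩ := hsupp hq'
    exact Prod.ext ((h a a').2 he) he
  · rintro _ hq _ hq' he
    obtain ⟨a, rfl⟩ := hsupp hq
    obtain ⟨a', rfl⟩ := hsupp hq'
    exact Prod.ext he ((h a a').1 he)

lemma mutualInfo_map_prodMap_id (ρ : Measure (α × β)) [IsFiniteMeasure ρ] {σ : α → γ}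
    (hσ : Function.Injective σ) : mutualInfo (ρ.map (Prod.map σ id)) = mutualInfo ρ := by
  have hfst : (ρ.map (Prod.map σ id)).map Prod.fst = (ρ.map Prod.fst).map σ := by
    simp only [Measure.map_map (measurable_of_finite _) (measurable_of_finite _)]
    rfl
  have hsnd : (ρ.map (Prod.map σ id)).map Prod.snd = ρ.map Prod.snd := by
    rw [Measure.map_map (measurable_of_finite _) (measurable_of_finite _)]
    rfl
  rw [mutualInfo, mutualInfo, hfst, hsnd, entropy_map_of_injOn _ hσ.injOn,
    entropy_map_of_injOn _ (hσ.prodMap Function.injective_id).injOn]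

lemma entropy_prod (μ : Measure α) (ν : Measure β) [IsProbabilityMeasure μ]
    [IsProbabilityMeasure ν] : entropy (μ.prod ν) = entropy μ + entropy ν := by
  simp only [entropy_eq_sum_negMulLog, Fintype.sum_prod_type, ← singleton_prod_singleton,
    measureReal_prod_prod, negMulLog_mul, sum_add_distrib, ← sum_mul, ← mul_sum,
    sum_measureReal_singleton, coe_univ, probReal_univ, one_mul, add_div]

lemma entropy_pi (p : Measure α) [IsProbabilityMeasure p] :
    ∀ n : ℕ, entropy (Measure.pi fun _ : Fin n => p) = n * entropy p
  | 0 => by simp [entropy_eq_sum_negMulLog, measureReal_def]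
  | n + 1 => by
    rw [← entropy_map_of_injOn _ (MeasurableEquiv.piFinSuccAbove (fun _ => α) 0).injective.injOn,
      (measurePreserving_piFinSuccAbove (fun _ => p) 0).map_eq, entropy_prod, entropy_pi p n]
    push_cast
    ring

end Entropy

section TimeSharing

variable {Ω ι β : Type*} [Fintype Ω] [MeasurableSpace Ω] [MeasurableSingletonClass Ω]
  [Fintype ι] [MeasurableSpace ι] [MeasurableSingletonClass ι]
  [Fintype β] [MeasurableSpace β] [MeasurableSingletonClass β]

omit [MeasurableSingletonClass ι] in
instance isProbabilityMeasure_unif [Nonempty ι] : IsProbabilityMeasure (unif ι) := by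
  constructor
  rw [unif, Measure.smul_apply, Measure.count_univ, ENat.card_eq_coe_fintype_card,
    ENat.toENNReal_coe, smul_eq_mul, ENNReal.inv_mul_cancel (by simp) (by simp)]

lemma measureReal_map_prod_unif (ν : Measure Ω) [IsFiniteMeasure ν] (Φ : Ω × ι → β)
    (s : Set β) :
    ((ν.prod (unif ι)).map Φ).real s =
      (∑ i, (ν.map fun ω => Φ (ω, i)).real s) / Fintype.card ι := by
  have hΦ : ∀ i, Measurable fun ω => Φ (ω, i) := fun _ => measurable_of_finite _
  simp only [map_measureReal_apply (measurable_of_finite Φ) (toFinite s).measurableSet,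
    map_measureReal_apply (hΦ _) (toFinite s).measurableSet, measureReal_def]
  rw [Measure.prod_apply_symm (toFinite (Φ ⁻¹' s)).measurableSet, unif,
    lintegral_smul_measure, lintegral_count, tsum_fintype, smul_eq_mul, ENNReal.toReal_mul,
    ENNReal.toReal_sum fun _ _ => measure_ne_top _ _, ENNReal.toReal_inv,
    ENNReal.toReal_natCast, inv_mul_eq_div]
  rfl

lemma entropy_map_prod_unif [Nonempty ι] (ν : Measure Ω) [IsProbabilityMeasure ν]
    (Φ : Ω × ι → β) (hΦ : ∀ q q', Φ q = Φ q' → q.2 = q'.2) :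
    entropy ((ν.prod (unif ι)).map Φ) =
      logb 2 (Fintype.card ι) +
        (∑ i, entropy (ν.map fun ω => Φ (ω, i))) / Fintype.card ι := by
  have hK : (0 : ℝ) < Fintype.card ι := by positivity
  set a : ι → β → ℝ := fun i b => (ν.map fun ω => Φ (ω, i)).real {b}
  have ha1 : ∀ i, ∑ b, a i b = 1 := fun i => by
    rw [sum_measureReal_singleton, coe_univ, map_measureReal_apply (measurable_of_finite _) .univ,
      preimage_univ, probReal_univ]
  have hdisj : ∀ b i j, a i b ≠ 0 → a j b ≠ 0 → i = j := by
    intro b i j hi hj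
    obtain ⟨ω, hω⟩ := mem_range_of_measureReal_map_singleton_ne_zero hi
    obtain ⟨ω', hω'⟩ := mem_range_of_measureReal_map_singleton_ne_zero hj
    exact hΦ (ω, i) (ω', j) (hω.trans hω'.symm)
  have hsum : ∑ b, negMulLog ((∑ i, a i b) / Fintype.card ι) =
      log (Fintype.card ι) + (∑ i, ∑ b, negMulLog (a i b)) / Fintype.card ι := by
    calc ∑ b, negMulLog ((∑ i, a i b) / Fintype.card ι)
        = ∑ i, ∑ b, negMulLog (a i b / Fintype.card ι) := by
          rw [sum_comm]
          refine sum_congr rfl fun b _ => ?_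
          rw [sum_div]
          refine negMulLog_sum_of_at_most_one_ne_zero fun i _ j _ hi hj => hdisj b i j ?_ ?_
          · exact fun h0 => hi (by simp [h0])
          · exact fun h0 => hj (by simp [h0])
      _ = ∑ i, ∑ b, (a i b * negMulLog (Fintype.card ι : ℝ)⁻¹ +
            (Fintype.card ι : ℝ)⁻¹ * negMulLog (a i b)) := by
          simp only [div_eq_mul_inv, negMulLog_mul, add_comm]
      _ = _ := by
          simp only [sum_add_distrib, ← sum_mul, ← mul_sum, ha1, negMulLog, log_inv, sum_const,
            card_univ, nsmul_eq_mul]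
          field_simp
  simp only [entropy_eq_sum_negMulLog, measureReal_map_prod_unif, ← sum_div, logb]
  rw [hsum]
  ring

end TimeSharing

section TotalVariation

variable {α : Type*} [MeasurableSpace α]

lemma tvDist_comm (μ ν : Measure α) : tvDist μ ν = tvDist ν μ := by
  simp only [tvDist, abs_sub_comm]

lemma abs_measureReal_sub_le_tvDist (μ ν : Measure α) [IsFiniteMeasure μ] [IsFiniteMeasure ν]
    {s : Set α} (hs : MeasurableSet s) : |μ.real s - ν.real s| ≤ tvDist μ ν := by
  refine le_ciSup (f := fun s : {s : Set α // MeasurableSet s} => |μ.real s - ν.real s|)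
    ⟨μ.real univ + ν.real univ, ?_⟩ ⟨s, hs⟩
  rintro _ ⟨t, rfl⟩
  refine (abs_sub _ _).trans ?_
  rw [abs_of_nonneg measureReal_nonneg, abs_of_nonneg measureReal_nonneg]
  exact add_le_add (measureReal_mono (Set.subset_univ _)) (measureReal_mono (Set.subset_univ _))

lemma tvDist_le_of_forall {μ ν : Measure α} {ε : ℝ}
    (h : ∀ s, MeasurableSet s → |μ.real s - ν.real s| ≤ ε) : tvDist μ ν ≤ ε :=
  have : Nonempty {s : Set α // MeasurableSet s} := ⟨⟨∅, .empty⟩⟩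
  ciSup_le fun s => h s.1 s.2

theorem entropy_le_of_tvDist_le [Fintype α] [MeasurableSingletonClass α] {μ ν : Measure α}
    [IsProbabilityMeasure μ] [IsProbabilityMeasure ν] {ε : ℝ} (h : tvDist μ ν ≤ ε)
    (hε : ε ≤ exp (-1)) :
    entropy μ ≤ entropy ν + ε * logb 2 (Fintype.card α) + 2 * ε * logb 2 (1 / ε) := by
  have hsum : ∀ ρ : Measure α, [IsProbabilityMeasure ρ] → ∑ a, ρ.real {a} = 1 :=
    fun ρ _ => by
      rw [sum_measureReal_singleton, coe_univ, probReal_univ]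
  have hAB : ∀ S : Finset α, ∑ a ∈ S, μ.real {a} - ∑ a ∈ S, ν.real {a} ≤ ε := by
    intro S
    rw [sum_measureReal_singleton, sum_measureReal_singleton]
    exact (le_abs_self _).trans
      ((abs_measureReal_sub_le_tvDist μ ν (toFinite _).measurableSet).trans h)
  have key := fannes_sum_negMulLog (fun _ => measureReal_nonneg) (fun _ => measureReal_nonneg)
    (hsum μ) (hsum ν) hAB hε
  rw [entropy_eq_sum_negMulLog, entropy_eq_sum_negMulLog]
  calc (∑ a, negMulLog (μ.real {a})) / log 2
      ≤ (∑ a, negMulLog (ν.real {a}) + ε * log (Fintype.card α) + 2 * negMulLog ε) /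
          log 2 := by
        gcongr
    _ = _ := by
        rw [negMulLog, one_div, logb, logb, log_inv]
        ring

lemma tvDist_map_prod_unif_le {Ω ι X : Type*} [Fintype Ω] [MeasurableSpace Ω]
    [MeasurableSingletonClass Ω] [Fintype ι] [Nonempty ι] [MeasurableSpace ι]
    [MeasurableSingletonClass ι] [Fintype X] [MeasurableSpace X] [MeasurableSingletonClass X]
    (ν : Measure Ω) [IsFiniteMeasure ν] (Y : Ω → ι → X) (p : Measure X)
    [IsProbabilityMeasure p] :
    tvDist ((ν.prod (unif ι)).map fun q => Y q.1 q.2) p ≤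
      tvDist (ν.map Y) (Measure.pi fun _ => p) := by
  refine tvDist_le_of_forall fun S hS => ?_
  have hK : (0 : ℝ) < Fintype.card ι := by positivity
  have hY : ∀ i, (ν.map fun ω => Y ω i).real S = (ν.map Y).real (Function.eval i ⁻¹' S) :=
    fun i => by
      rw [map_measureReal_apply (measurable_of_finite _) hS,
        map_measureReal_apply (measurable_of_finite _) (measurable_pi_apply i hS)]
      rfl
  have hp : ∀ i : ι, (Measure.pi fun _ => p).real (Function.eval i ⁻¹' S) = p.real S :=
    fun i => (measurePreserving_eval (fun _ => p) i).measureReal_preimage hS.nullMeasurableSet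
  rw [measureReal_map_prod_unif]
  calc |(∑ i, (ν.map fun ω => Y ω i).real S) / Fintype.card ι - p.real S|
      = |∑ i, ((ν.map Y).real (Function.eval i ⁻¹' S) -
          (Measure.pi fun _ => p).real (Function.eval i ⁻¹' S))| / Fintype.card ι := by
        rw [div_sub' hK.ne', abs_div, abs_of_pos hK]
        simp only [hY, hp, sum_sub_distrib, sum_const, card_univ, nsmul_eq_mul]
    _ ≤ (∑ _i : ι, tvDist (ν.map Y) (Measure.pi fun _ => p)) / Fintype.card ι := by
        gcongr
        exact (abs_sum_le_sum_abs _ _).trans (sum_le_sum fun i _ =>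
          abs_measureReal_sub_le_tvDist _ _ (measurable_pi_apply i hS))
    _ = _ := by
        rw [sum_const, card_univ, nsmul_eq_mul]
        field_simp

end TotalVariation

instance {α : Type*} : DiscreteMeasurableSpace (Option α) := ⟨fun _ => trivial⟩

section ChainRule

variable {n : ℕ} {X : Type*}

def prefixUpTo (k : ℕ) (y : Fin n → X) : Fin n → Option X :=
  fun i => if (i : ℕ) < k then some (y i) else none

lemma prefixUpTo_eq_iff {k : ℕ} {y y' : Fin n → X} :
    prefixUpTo k y = prefixUpTo k y' ↔ ∀ i : Fin n, (i : ℕ) < k → y i = y' i := by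
  simp only [funext_iff, prefixUpTo]
  refine forall_congr' fun i => ?_
  split_ifs with h <;> simp [h]

lemma prefixOf_eq_prefixUpTo (y : Fin n → X) (t : Fin n) : prefixOf y t = prefixUpTo t y := rfl

/-- In the notation of the paper, with `T` uniform on `Fin n` and independent of `ω`:
`I(W; Yⁿ) = n I(W, T, Y^{T-1}; Y_T) + H(Yⁿ) - n H(Y_T)`. -/
theorem mutualInfo_eq_mul_mutualInfo_timeSharing {Ω 𝒲 : Type*} [Fintype Ω]
    [MeasurableSpace Ω] [MeasurableSingletonClass Ω]
    [Fintype 𝒲] [MeasurableSpace 𝒲] [MeasurableSingletonClass 𝒲]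
    [Fintype X] [MeasurableSpace X] [MeasurableSingletonClass X] [NeZero n]
    (μ : Measure Ω) [IsProbabilityMeasure μ] (W : Ω → 𝒲) (Y : Ω → Fin n → X) :
    mutualInfo (μ.map fun ω => (W ω, Y ω)) =
      n * mutualInfo ((μ.prod (unif (Fin n))).map
          fun q => ((W q.1, q.2, prefixOf (Y q.1) q.2), Y q.1 q.2))
        + entropy (μ.map Y) - n * entropy ((μ.prod (unif (Fin n))).map fun q => Y q.1 q.2) := by
  set H : ℕ → ℝ := fun k => entropy (μ.map fun ω => (W ω, prefixUpTo k (Y ω)))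
  have hH0 : H 0 = entropy (μ.map W) :=
    entropy_map_eq_of_forall_eq_iff _ fun ω ω' => by simp [prefixUpTo_eq_iff]
  have hHn : H n = entropy (μ.map fun ω => (W ω, Y ω)) :=
    entropy_map_eq_of_forall_eq_iff _ fun ω ω' => by
      rw [Prod.mk.injEq, Prod.mk.injEq, prefixUpTo_eq_iff, funext_iff]
      simp
  have hV : ∀ t : Fin n, entropy (μ.map fun ω => (W ω, t, prefixOf (Y ω) t)) = H t :=
    fun t => entropy_map_eq_of_forall_eq_iff _ fun ω ω' => by simp [prefixOf_eq_prefixUpTo]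
  have hVY : ∀ t : Fin n,
      entropy (μ.map fun ω => ((W ω, t, prefixOf (Y ω) t), Y ω t)) = H (t + 1) := by
    refine fun t => entropy_map_eq_of_forall_eq_iff _ fun ω ω' => ?_
    simp only [Prod.mk.injEq, prefixOf_eq_prefixUpTo, prefixUpTo_eq_iff, true_and, and_assoc]
    refine and_congr_right fun _ => ⟨fun h i hi => ?_, fun h => ⟨fun i hi => h i (by omega),
      h t (by omega)⟩⟩
    rcases (Nat.lt_succ_iff_lt_or_eq.1 hi) with hi | hi
    · exact h.1 i hi
    · exact (Fin.ext hi) ▸ h.2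
  have htel : ∑ t : Fin n, (H (t + 1) - H t) = H n - H 0 := by
    rw [Fin.sum_univ_eq_sum_range (fun k => H (k + 1) - H k), sum_range_sub]
  simp only [mutualInfo, Measure.map_map (measurable_of_finite _) (measurable_of_finite _),
    Function.comp_def]
  rw [entropy_map_prod_unif μ (fun q => (W q.1, q.2, prefixOf (Y q.1) q.2))
      fun q q' h => by simp_all,
    entropy_map_prod_unif μ (fun q => ((W q.1, q.2, prefixOf (Y q.1) q.2), Y q.1 q.2))
      fun q q' h => by simp_all]
  simp only [hV, hVY, Fintype.card_fin, ← hH0, ← hHn]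
  rw [sum_sub_distrib] at htel
  have hn : (n : ℝ) ≠ 0 := Nat.cast_ne_zero.2 (NeZero.ne n)
  field_simp
  linear_combination htel

end ChainRule

theorem mul_entropy_timeShared_sub_entropy_le {Ω X : Type*} [Fintype Ω] [MeasurableSpace Ω]
    [MeasurableSingletonClass Ω] [Fintype X] [MeasurableSpace X] [MeasurableSingletonClass X]
    {n : ℕ} [NeZero n] (μ : Measure Ω) [IsProbabilityMeasure μ] (Y : Ω → Fin n → X)
    (p : Measure X) [IsProbabilityMeasure p] {ε : ℝ} (hε0 : 0 < ε) (hε : ε ≤ exp (-1))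
    (hTV : tvDist (μ.map Y) (Measure.pi fun _ => p) ≤ ε) :
    n * entropy ((μ.prod (unif (Fin n))).map fun q => Y q.1 q.2) - entropy (μ.map Y) ≤
      2 * n * (4 * ε * (logb 2 (Fintype.card X) + logb 2 (1 / ε))) := by
  have : IsProbabilityMeasure (μ.map Y) :=
    Measure.isProbabilityMeasure_map (measurable_of_finite _).aemeasurable
  have : IsProbabilityMeasure ((μ.prod (unif (Fin n))).map fun q => Y q.1 q.2) :=
    Measure.isProbabilityMeasure_map (measurable_of_finite _).aemeasurable
  have hYn := entropy_le_of_tvDist_le ((tvDist_comm _ _).trans_le hTV) hε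
  have hYT := entropy_le_of_tvDist_le ((tvDist_map_prod_unif_le μ Y p).trans hTV) hε
  rw [entropy_pi, Fintype.card_fun, Fintype.card_fin, Nat.cast_pow, logb_pow] at hYn
  have hL : 0 ≤ n * ε * logb 2 (Fintype.card X) :=
    mul_nonneg (by positivity) (div_nonneg (log_natCast_nonneg _) (log_nonneg one_le_two))
  have hM0 : 0 ≤ ε * logb 2 (1 / ε) := mul_nonneg hε0.le
    (logb_nonneg one_lt_two (one_le_one_div hε0 (hε.trans (exp_le_one_iff.2 (by norm_num)))))
  have hM : ε * logb 2 (1 / ε) ≤ n * (ε * logb 2 (1 / ε)) :=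
    le_mul_of_one_le_left hM0 (Nat.one_le_cast.2 (Nat.pos_of_ne_zero (NeZero.ne n)))
  linarith [mul_le_mul_of_nonneg_left hYT n.cast_nonneg]

theorem stmt_8_general {Xty Mty Jty : Type*}
    [Fintype Xty] [MeasurableSpace Xty] [MeasurableSingletonClass Xty]
    [Fintype Mty] [MeasurableSpace Mty] [MeasurableSingletonClass Mty]
    [Fintype Jty] [MeasurableSpace Jty] [MeasurableSingletonClass Jty]
    {n : ℕ} (hn : 0 < n)
    (p : Measure Xty) [IsProbabilityMeasure p]
    (μ : Measure (((Fin n → Xty) × Mty × Jty) × (Fin n → Xty))) [IsProbabilityMeasure μ]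
    (ε : ℝ) (hε0 : 0 < ε) (hε : ε < 1 / 4)
    -- near-perfect realism: ‖P_{Y^n} − p^{⊗n}‖_TV ≤ ε
    (hTV : tvDist (μ.map Prod.snd) (Measure.pi fun _ => p) ≤ ε) :
    mutualInfo (μ.map fun ω => ((ω.1.2.1, ω.1.2.2), ω.2)) ≥
      (n : ℝ) * mutualInfo ((μ.prod (unif (Fin n))).map
          (fun ω => ((ω.1.1.2.1, ω.1.1.2.2, ω.2, prefixOf ω.1.2 ω.2), ω.1.2 ω.2)))
        - 2 * n * (4 * ε * (Real.logb 2 (Fintype.card Xty) + Real.logb 2 (1 / ε))) := by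
  have : NeZero n := ⟨hn.ne'⟩
  have hεe : ε ≤ exp (-1) := hε.le.trans <| by
    rw [exp_neg, ← one_div]
    exact one_div_le_one_div_of_le (exp_pos 1) (exp_one_lt_d9.trans (by norm_num)).le
  have hreassoc : mutualInfo ((μ.prod (unif (Fin n))).map
      fun ω => ((ω.1.1.2.1, ω.1.1.2.2, ω.2, prefixOf ω.1.2 ω.2), ω.1.2 ω.2)) =
      mutualInfo ((μ.prod (unif (Fin n))).map
        fun ω => (((ω.1.1.2.1, ω.1.1.2.2), ω.2, prefixOf ω.1.2 ω.2), ω.1.2 ω.2)) := by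
    rw [← mutualInfo_map_prodMap_id _ (σ := fun v : (Mty × Jty) × _ => (v.1.1, v.1.2, v.2))
      fun v w h => by simp_all [Prod.ext_iff],
      Measure.map_map (measurable_of_finite _) (measurable_of_finite _)]
    rfl
  rw [ge_iff_le, hreassoc,
    mutualInfo_eq_mul_mutualInfo_timeSharing μ (fun ω => (ω.1.2.1, ω.1.2.2)) Prod.snd]
  linarith [mul_entropy_timeShared_sub_entropy_le μ Prod.snd p hε0 hεe hTV]

/-- Converse bound: with X^n i.i.d. ∼ p, J independent of X^n, Markov chain
X^n − (M,J) − Y^n, realism constraint ‖P_{Y^n} − p^{⊗n}‖_TV ≤ ε < 1/4, T uniform on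
[n] and V = (M, J, T, Y^{T−1}), we have
I(M,J ; Y^n) ≥ n·I(V ; Y_T) − 2n·g(ε) with g(ε) = 4ε(log|X| + log(1/ε)). -/
theorem stmt_8 {Xty Mty Jty : Type*}
    [Fintype Xty] [MeasurableSpace Xty] [MeasurableSingletonClass Xty]
    [Fintype Mty] [MeasurableSpace Mty] [MeasurableSingletonClass Mty]
    [Fintype Jty] [MeasurableSpace Jty] [MeasurableSingletonClass Jty]
    {n : ℕ} (hn : 0 < n)
    (p : Measure Xty) [IsProbabilityMeasure p]
    (μ : Measure (((Fin n → Xty) × Mty × Jty) × (Fin n → Xty))) [IsProbabilityMeasure μ]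
    -- X^n is i.i.d. with distribution p and J is independent of X^n
    (hXJ : μ.map (fun ω => (ω.1.1, ω.1.2.2)) =
      (Measure.pi fun _ => p).prod (μ.map fun ω => ω.1.2.2))
    -- Markov chain X^n − (M,J) − Y^n
    (hMarkov : ∃ κ : Kernel (Mty × Jty) (Fin n → Xty), IsMarkovKernel κ ∧
      μ = (μ.map Prod.fst) ⊗ₘ (κ.comap Prod.snd measurable_snd))
    (ε : ℝ) (hε0 : 0 < ε) (hε : ε < 1 / 4)
    -- near-perfect realism: ‖P_{Y^n} − p^{⊗n}‖_TV ≤ ε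
    (hTV : tvDist (μ.map Prod.snd) (Measure.pi fun _ => p) ≤ ε) :
    mutualInfo (μ.map fun ω => ((ω.1.2.1, ω.1.2.2), ω.2)) ≥
      (n : ℝ) * mutualInfo ((μ.prod (unif (Fin n))).map
          (fun ω => ((ω.1.1.2.1, ω.1.1.2.2, ω.2, prefixOf ω.1.2 ω.2), ω.1.2 ω.2)))
        - 2 * n * (4 * ε * (Real.logb 2 (Fintype.card Xty) + Real.logb 2 (1 / ε))) :=
  stmt_8_general hn p μ ε hε0 hε hTV
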